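/- For the generalized Gaussian family with β even, the 1-connection coefficient Γ^{(1)}₁₂₁ = E[(∂²_{μσ} l)(∂_μ l)] equals −(1/σ³)·Γ((2β−1)/β)β³/Γ(1/β). -/

import Mathlib

/-!
Both log-likelihood derivatives are monomials in `x - μ`: `∂_μ l = β (x-μ)^(β-1) / σ^β` and
`∂²_{σμ} l = -β² (x-μ)^(β-1) / σ^(β+1)`. Hence the integrand is `-β³ / σ^(2β+1)` times
`(x-μ)^(2β-2) f`, and this central moment is reduced by `u = |x - μ|` (β is even) to the
Gamma integral `∫₀^∞ u^p exp(-u^β/σ^β) du = σ^(p+1) Γ((p+1)/β) / β`.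
-/

open MeasureTheory

/-- The generalized Gaussian density. -/
noncomputable def genGaussPdf (β : ℕ) (μ σ x : ℝ) : ℝ :=
  (β : ℝ) / (2 * σ * Real.Gamma (1 / (β : ℝ))) * Real.exp (-(x - μ) ^ β / σ ^ β)

/-- The log-likelihood `l = log f`. -/
noncomputable def genGaussLogLik (β : ℕ) (μ σ x : ℝ) : ℝ :=
  Real.log (genGaussPdf β μ σ x)

section

open Real

lemma genGaussLogLik_eq {β : ℕ} (hβ : 0 < β) {s : ℝ} (hs : s ≠ 0) (m x : ℝ) :
    genGaussLogLik β m s x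
      = log (β / (2 * s * Gamma (1 / β))) - (x - m) ^ β / s ^ β := by
  have hc : (β : ℝ) / (2 * s * Gamma (1 / β)) ≠ 0 := by positivity
  rw [genGaussLogLik, genGaussPdf, log_mul hc (exp_ne_zero _), log_exp]
  ring

lemma hasDerivAt_genGaussLogLik_mean {β : ℕ} (hβ : 0 < β) {s : ℝ} (hs : s ≠ 0) (x μ : ℝ) :
    HasDerivAt (fun m => genGaussLogLik β m s x) (β * (x - μ) ^ (β - 1) / s ^ β) μ := by
  simp only [genGaussLogLik_eq hβ hs]
  refine (((((hasDerivAt_id' μ).const_sub x).fun_pow β).div_const (s ^ β)).const_sub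
    (log (β / (2 * s * Gamma (1 / β))))).congr_deriv ?_
  ring

lemma deriv_genGaussLogLik_mean {β : ℕ} (hβ : 0 < β) {s : ℝ} (hs : s ≠ 0) (x μ : ℝ) :
    deriv (fun m => genGaussLogLik β m s x) μ = β * (x - μ) ^ (β - 1) / s ^ β :=
  (hasDerivAt_genGaussLogLik_mean hβ hs x μ).deriv

lemma deriv_scale_deriv_genGaussLogLik_mean {β : ℕ} (hβ : 0 < β) {σ : ℝ} (hσ : σ ≠ 0)
    (x μ : ℝ) :
    deriv (fun s => deriv (fun m => genGaussLogLik β m s x) μ) σ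
      = -(β ^ 2 * (x - μ) ^ (β - 1) / σ ^ (β + 1)) := by
  have hev : (fun s => deriv (fun m => genGaussLogLik β m s x) μ)
      =ᶠ[nhds σ] fun s => β * (x - μ) ^ (β - 1) * (s ^ β)⁻¹ := by
    filter_upwards [isOpen_ne.mem_nhds hσ] with s hs
    rw [deriv_genGaussLogLik_mean hβ hs, div_eq_mul_inv]
  have hinv : HasDerivAt (fun s : ℝ => (s ^ β)⁻¹) (-(β * σ ^ (β - 1)) / (σ ^ β) ^ 2) σ :=
    (hasDerivAt_pow β σ).fun_inv (pow_ne_zero β hσ)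
  rw [hev.deriv_eq, (hinv.const_mul _).deriv]
  obtain ⟨n, rfl⟩ := Nat.exists_eq_add_of_lt hβ
  simp only [zero_add, add_tsub_cancel_right, Nat.cast_add, Nat.cast_one]
  field_simp
  ring

lemma integral_Ioi_pow_mul_exp_neg_pow_div_pow {β : ℕ} (hβ : 0 < β) (p : ℕ) {σ : ℝ}
    (hσ : 0 < σ) :
    ∫ u in Set.Ioi (0 : ℝ), u ^ p * exp (-u ^ β / σ ^ β)
      = σ ^ (p + 1) / β * Gamma ((p + 1) / β) := by
  have hβ' : (0 : ℝ) < β := by exact_mod_cast hβ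
  have hrpow : ∫ u in Set.Ioi (0 : ℝ), u ^ p * exp (-u ^ β / σ ^ β)
      = ∫ u in Set.Ioi (0 : ℝ), u ^ (p : ℝ) * exp (-(σ ^ β)⁻¹ * u ^ (β : ℝ)) := by
    refine setIntegral_congr_fun measurableSet_Ioi fun u _ => ?_
    rw [rpow_natCast, rpow_natCast, neg_div, div_eq_inv_mul, neg_mul]
  have hscale : ((σ ^ β)⁻¹ : ℝ) ^ (-((p : ℝ) + 1) / β) = σ ^ (p + 1) := by
    rw [← rpow_natCast σ β, ← rpow_neg hσ.le, ← rpow_mul hσ.le, ← rpow_natCast σ (p + 1)]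
    congr 1
    field_simp
    push_cast
    ring
  rw [hrpow, integral_rpow_mul_exp_neg_mul_rpow hβ'
    (neg_one_lt_zero.trans_le p.cast_nonneg) (by positivity), hscale]
  ring

lemma integral_pow_mul_exp_neg_pow_div_pow {β p : ℕ} (hβ : Even β) (hβpos : 0 < β)
    (hp : Even p) {σ : ℝ} (hσ : 0 < σ) :
    ∫ u, u ^ p * exp (-u ^ β / σ ^ β) = 2 * (σ ^ (p + 1) / β * Gamma ((p + 1) / β)) := by
  have habs : (fun u : ℝ => u ^ p * exp (-u ^ β / σ ^ β))
      = fun u => |u| ^ p * exp (-|u| ^ β / σ ^ β) := by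
    simp only [hp.pow_abs, hβ.pow_abs]
  rw [habs, integral_comp_abs (f := fun u => u ^ p * exp (-u ^ β / σ ^ β)),
    integral_Ioi_pow_mul_exp_neg_pow_div_pow hβpos p hσ]

lemma integral_sub_pow_mul_genGaussPdf {β p : ℕ} (hβ : Even β) (hβpos : 0 < β)
    (hp : Even p) (μ : ℝ) {σ : ℝ} (hσ : 0 < σ) :
    ∫ x, (x - μ) ^ p * genGaussPdf β μ σ x = σ ^ p * Gamma ((p + 1) / β) / Gamma (1 / β) := by
  have hΓ : Gamma (1 / (β : ℝ)) ≠ 0 := (Gamma_pos_of_pos (by positivity)).ne'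
  simp only [genGaussPdf, mul_left_comm ((_ - μ) ^ p)]
  rw [integral_const_mul,
    integral_sub_right_eq_self (fun u => u ^ p * exp (-u ^ β / σ ^ β)) μ,
    integral_pow_mul_exp_neg_pow_div_pow hβ hβpos hp hσ]
  field_simp
  ring

end

theorem generalized_gaussian_Gamma1_121
    (β : ℕ) (hβeven : Even β) (hβpos : 0 < β) (μ σ : ℝ) (hσ : 0 < σ) :
    ∫ x : ℝ, (deriv (fun s => deriv (fun m => genGaussLogLik β m s x) μ) σ)
        * (deriv (fun m => genGaussLogLik β m σ x) μ) * genGaussPdf β μ σ x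
      = -((1 / σ ^ 3) * (Real.Gamma ((2 * (β : ℝ) - 1) / (β : ℝ)) * (β : ℝ) ^ 3
          / Real.Gamma (1 / (β : ℝ)))) := by
  have hintegrand : ∀ x, deriv (fun s => deriv (fun m => genGaussLogLik β m s x) μ) σ
        * deriv (fun m => genGaussLogLik β m σ x) μ * genGaussPdf β μ σ x
      = -(β ^ 3 / σ ^ (2 * β + 1)) * ((x - μ) ^ (2 * (β - 1)) * genGaussPdf β μ σ x) := by
    intro x
    rw [deriv_scale_deriv_genGaussLogLik_mean hβpos hσ.ne',
      deriv_genGaussLogLik_mean hβpos hσ.ne', pow_mul', show 2 * β + 1 = β + 1 + β by ring,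
      pow_add]
    ring
  have hexp : ((2 * (β - 1) : ℕ) : ℝ) + 1 = 2 * β - 1 := by
    push_cast [Nat.one_le_iff_ne_zero.mpr hβpos.ne']
    ring
  have hΓ : Real.Gamma (1 / (β : ℝ)) ≠ 0 := (Real.Gamma_pos_of_pos (by positivity)).ne'
  simp only [hintegrand]
  rw [integral_const_mul, integral_sub_pow_mul_genGaussPdf hβeven hβpos (even_two_mul _) μ hσ,
    hexp, show 2 * β + 1 = 2 * (β - 1) + 3 by omega, pow_add]
  field_simp
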